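/- arXiv:2002.06607 — 3 statements merged into one kernel-verified Lean document; each statement's English description precedes it below -/
import Mathlib

section
/- For k = 1, ..., n−1, define the matrices B_k = [b_ij^k] by b_ij^k = 1 if i ≤ k < j, b_ij^k = −1 if j ≤ k < i, and 0 otherwise. Then {B_1, ..., B_{n−1}} is a basis of the space of additively consistent n×n matrices. -/
/-- The subspace of additively consistent n×n matrices over a field K. -/
def consistentSubmodule (K : Type*) [Field K] (n : ℕ) :
    Submodule K (Matrix (Fin n) (Fin n) K) where
  carrier := {A | ∀ i j k, A i k + A k j = A i j}
  add_mem' := by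
    intro a b ha hb i j k
    simp only [Matrix.add_apply]
    rw [add_add_add_comm, ha i j k, hb i j k]
  zero_mem' := by intro i j k; simp
  smul_mem' := by
    intro c a ha i j k
    simp only [Matrix.smul_apply, smul_eq_mul]
    rw [← mul_add, ha i j k]

/-- The k-th basis matrix: entries 1 when i ≤ k < j, −1 when j ≤ k < i, 0 otherwise. -/
def basisMatrix (K : Type*) [Field K] (n : ℕ) (k : Fin (n - 1)) :
    Matrix (Fin n) (Fin n) K :=
  fun i j =>
    if i.val ≤ k.val ∧ k.val < j.val then 1
    else if j.val ≤ k.val ∧ k.val < i.val then -1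
    else 0

section Aux

variable {K : Type*} [Field K] {n : ℕ}

def gfun (c : Fin (n - 1) → K) (i : Fin n) : K :=
  ∑ m : Fin (n - 1), if i.val ≤ m.val then c m else 0

def consMat (c : Fin (n - 1) → K) : Matrix (Fin n) (Fin n) K :=
  fun i j => gfun c i - gfun c j

lemma consMat_mem (c : Fin (n - 1) → K) : consMat c ∈ consistentSubmodule K n := by
  intro i j k
  simp only [consMat]
  ring

def coordF (A : Matrix (Fin n) (Fin n) K) (k : Fin (n - 1)) : K :=
  A ⟨k.val, Nat.lt_of_lt_of_le k.isLt (Nat.sub_le n 1)⟩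
    ⟨k.val + 1, by have := k.isLt; omega⟩

lemma diag_zero {A : Matrix (Fin n) (Fin n) K} (hA : A ∈ consistentSubmodule K n)
    (i : Fin n) : A i i = 0 := by
  exact left_eq_add.mp (hA i i i).symm

lemma gfun_coordF {A : Matrix (Fin n) (Fin n) K} (hA : A ∈ consistentSubmodule K n)
    (i : Fin n) : gfun (coordF A) i = A i ⟨n - 1, by have := i.isLt; omega⟩ := by
  have hn : 0 < n := i.pos
  set last : Fin n := ⟨n - 1, by omega⟩ with hlast
  -- h m = A ⟨m⟩ last for m < n, else 0
  set h : ℕ → K := fun m => if hm : m < n then A ⟨m, hm⟩ last else 0 with hh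
  have key : ∀ m : Fin (n - 1), coordF A m = h m.val - h (m.val + 1) := by
    intro m
    have hm1 : m.val < n := Nat.lt_of_lt_of_le m.isLt (Nat.sub_le n 1)
    have hm2 : m.val + 1 < n := by have := m.isLt; omega
    simp only [hh, dif_pos hm1, dif_pos hm2]
    have := hA ⟨m.val, hm1⟩ ⟨m.val + 1, hm2⟩ last
    have := hA ⟨m.val + 1, hm2⟩ ⟨m.val + 1, hm2⟩ last
    have hz := diag_zero hA (⟨m.val + 1, hm2⟩ : Fin n)
    -- A m (m+1) = A m last + A last (m+1), A last (m+1) = - A (m+1) last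
    have e1 : A ⟨m.val, hm1⟩ last + A last ⟨m.val + 1, hm2⟩ = A ⟨m.val, hm1⟩ ⟨m.val + 1, hm2⟩ :=
      hA _ _ _
    have e2 : A ⟨m.val + 1, hm2⟩ last + A last ⟨m.val + 1, hm2⟩ =
        A ⟨m.val + 1, hm2⟩ ⟨m.val + 1, hm2⟩ := hA _ _ _
    simp only [coordF]
    rw [hz] at e2
    linear_combination e2 - e1
  calc gfun (coordF A) i
      = ∑ m : Fin (n - 1), if i.val ≤ m.val then h m.val - h (m.val + 1) else 0 := by
        apply Finset.sum_congr rfl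
        intro m _
        rw [key m]
    _ = ∑ m ∈ Finset.range (n - 1), if i.val ≤ m then h m - h (m + 1) else 0 := by
        rw [Fin.sum_univ_eq_sum_range (fun m => if i.val ≤ m then h m - h (m + 1) else 0)]
    _ = ∑ m ∈ Finset.Ico i.val (n - 1), (h m - h (m + 1)) := by
        rw [← Finset.sum_filter]
        congr 1
        ext m
        simp only [Finset.mem_filter, Finset.mem_range, Finset.mem_Ico]
        omega
    _ = ∑ j ∈ Finset.range (n - 1 - i.val), (h (i.val + j) - h (i.val + j + 1)) := by
        rw [Finset.sum_Ico_eq_sum_range]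
    _ = h i.val - h (i.val + (n - 1 - i.val)) := Finset.sum_range_sub' (fun j => h (i.val + j)) _
    _ = A i last := by
        have hi : i.val ≤ n - 1 := by have := i.isLt; omega
        have : i.val + (n - 1 - i.val) = n - 1 := by omega
        rw [this]
        simp only [hh, dif_pos i.isLt, dif_pos (show n - 1 < n by omega)]
        rw [diag_zero hA last]
        simp

lemma consMat_coordF {A : Matrix (Fin n) (Fin n) K} (hA : A ∈ consistentSubmodule K n) :
    consMat (coordF A) = A := by
  ext i j
  simp only [consMat]
  rw [gfun_coordF hA i, gfun_coordF hA j]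
  set last : Fin n := ⟨n - 1, by have := i.isLt; omega⟩
  have e1 : A i last + A last j = A i j := hA _ _ _
  have e2 : A j last + A last j = A j j := hA _ _ _
  rw [diag_zero hA j] at e2
  linear_combination e1 - e2

lemma coordF_consMat (c : Fin (n - 1) → K) : coordF (consMat c) = c := by
  funext k
  simp only [coordF, consMat, gfun]
  rw [← Finset.sum_sub_distrib]
  have : ∀ m : Fin (n - 1),
      ((if k.val ≤ m.val then c m else 0) - (if k.val + 1 ≤ m.val then c m else 0))
        = if m = k then c m else 0 := by
    intro m
    rcases eq_or_ne m k with rfl | hne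
    · simp
    · have : m.val ≠ k.val := fun h => hne (Fin.ext h)
      by_cases h1 : k.val ≤ m.val
      · have h2 : k.val + 1 ≤ m.val := by omega
        simp [h1, h2, hne]
      · have h2 : ¬ (k.val + 1 ≤ m.val) := by omega
        simp [h1, h2, hne]
  rw [Finset.sum_congr rfl (fun m _ => this m)]
  simp

noncomputable def consEquiv (K : Type*) [Field K] (n : ℕ) :
    consistentSubmodule K n ≃ₗ[K] (Fin (n - 1) → K) where
  toFun A := coordF (A : Matrix (Fin n) (Fin n) K)
  map_add' A B := by funext k; simp [coordF]
  map_smul' c A := by funext k; simp [coordF]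
  invFun c := ⟨consMat c, consMat_mem c⟩
  left_inv A := by
    apply Subtype.ext
    exact consMat_coordF A.2
  right_inv c := coordF_consMat c

end Aux

/-- The matrices B₁, …, B_{n−1} form a basis of the space of additively
consistent n×n matrices. -/
theorem basisMatrix_is_basis (K : Type*) [Field K] (n : ℕ) :
    ∃ b : Module.Basis (Fin (n - 1)) K (consistentSubmodule K n),
      ∀ k : Fin (n - 1), (b k : Matrix (Fin n) (Fin n) K) = basisMatrix K n k := by
  refine ⟨Module.Basis.ofEquivFun (consEquiv K n), ?_⟩
  intro k
  rw [Module.Basis.coe_ofEquivFun]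
  show (consMat (Function.update (0 : Fin (n-1) → K) k 1) : Matrix (Fin n) (Fin n) K)
      = basisMatrix K n k
  ext i j
  simp only [consMat, gfun, basisMatrix]
  have hsum : ∀ i' : Fin n,
      (∑ m : Fin (n - 1), if i'.val ≤ m.val then Function.update (0 : Fin (n-1) → K) k 1 m else 0)
        = if i'.val ≤ k.val then 1 else 0 := by
    intro i'
    have step : ∀ m : Fin (n - 1),
        (if i'.val ≤ m.val then Function.update (0 : Fin (n-1) → K) k 1 m else 0)
          = if m = k then (if i'.val ≤ k.val then (1:K) else 0) else 0 := by
      intro m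
      rcases eq_or_ne m k with rfl | hne
      · simp
      · simp [Function.update_of_ne hne, hne]
    rw [Finset.sum_congr rfl (fun m _ => step m),
      Finset.sum_ite_eq' Finset.univ k (fun _ => if i'.val ≤ k.val then (1:K) else 0)]
    simp
  rw [hsum i, hsum j]

  split_ifs <;> first | omega | norm_num
end

section
/- Given positive semi-definite Hermitian n×n matrices X_1, ..., X_m and Y_1, ..., Y_m such that the map A ↦ Σ_i X_i A Y_i is injective (e.g., some X_i, Y_i positive definite), the function ⟨A, B⟩_* = tr(Σ_{i=1}^m B* X_i A Y_i) defines an inner product on M(n, ℂ): it is linear in A, conjugate-symmetric, and positive definite. -/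
open Matrix

open scoped ComplexOrder

section SqrtPort
open scoped MatrixOrder

noncomputable def Matrix.PosSemidef.sqrt {n : ℕ} {A : Matrix (Fin n) (Fin n) ℂ}
    (_ : A.PosSemidef) : Matrix (Fin n) (Fin n) ℂ := CFC.sqrt A

lemma Matrix.PosSemidef.posSemidef_sqrt {n : ℕ} {A : Matrix (Fin n) (Fin n) ℂ}
    (hA : A.PosSemidef) : hA.sqrt.PosSemidef :=
  (CFC.sqrt_nonneg A).posSemidef

lemma Matrix.PosSemidef.sqrt_mul_self {n : ℕ} {A : Matrix (Fin n) (Fin n) ℂ}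
    (hA : A.PosSemidef) : hA.sqrt * hA.sqrt = A :=
  CFC.sqrt_mul_sqrt_self A hA.nonneg

end SqrtPort

lemma trace_conjT_mul_self_re {n : ℕ} (M : Matrix (Fin n) (Fin n) ℂ) :
    (Matrix.trace (Mᴴ * M)).re = ∑ j, ∑ k, Complex.normSq (M k j) := by
  simp [Matrix.trace, Matrix.diag, Matrix.mul_apply, Complex.normSq_apply,
    Complex.re_sum]

lemma trace_conjT_mul_self_im {n : ℕ} (M : Matrix (Fin n) (Fin n) ℂ) :
    (Matrix.trace (Mᴴ * M)).im = 0 := by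
  simp [Matrix.trace, Matrix.diag, Matrix.mul_apply, Complex.im_sum, mul_comm]

lemma key_decomp' {n : ℕ} (C D A : Matrix (Fin n) (Fin n) ℂ)
    (hCH : Cᴴ = C) (hDH : Dᴴ = D) :
    Matrix.trace (Aᴴ * (C * C) * A * (D * D))
      = Matrix.trace ((C * A * D)ᴴ * (C * A * D)) := by
  rw [show Aᴴ * (C * C) * A * (D * D) = (Aᴴ * (C * C) * A * D) * D from by
    noncomm_ring, Matrix.trace_mul_comm]
  simp only [conjTranspose_mul, hCH, hDH, conjTranspose_conjTranspose]
  congr 1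
  noncomm_ring

/-- Given positive semidefinite matrices X_i, Y_i such that
A ↦ Σ_i X_i A Y_i is injective, the function
⟨A, B⟩_* = tr(Σ_i Bᴴ X_i A Y_i) is an inner product on M(n, ℂ):
additive and homogeneous in A, conjugate-symmetric, and positive definite. -/
theorem trace_sum_inner_product {n m : ℕ}
    (X Y : Fin m → Matrix (Fin n) (Fin n) ℂ)
    (hX : ∀ i, (X i).PosSemidef) (hY : ∀ i, (Y i).PosSemidef)
    (hinj : Function.Injective
      (fun A : Matrix (Fin n) (Fin n) ℂ => ∑ i, X i * A * Y i)) :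
    (∀ A A' B : Matrix (Fin n) (Fin n) ℂ,
        Matrix.trace (∑ i, Bᴴ * X i * (A + A') * Y i)
          = Matrix.trace (∑ i, Bᴴ * X i * A * Y i)
            + Matrix.trace (∑ i, Bᴴ * X i * A' * Y i)) ∧
    (∀ (c : ℂ) (A B : Matrix (Fin n) (Fin n) ℂ),
        Matrix.trace (∑ i, Bᴴ * X i * (c • A) * Y i)
          = c * Matrix.trace (∑ i, Bᴴ * X i * A * Y i)) ∧
    (∀ A B : Matrix (Fin n) (Fin n) ℂ,
        Matrix.trace (∑ i, Aᴴ * X i * B * Y i)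
          = starRingEnd ℂ (Matrix.trace (∑ i, Bᴴ * X i * A * Y i))) ∧
    (∀ A : Matrix (Fin n) (Fin n) ℂ, A ≠ 0 →
        0 < (Matrix.trace (∑ i, Aᴴ * X i * A * Y i)).re ∧
        (Matrix.trace (∑ i, Aᴴ * X i * A * Y i)).im = 0) := by
  refine ⟨?_, ?_, ?_, ?_⟩
  · intro A A' B
    simp [mul_add, add_mul, Finset.sum_add_distrib, Matrix.trace_add]
  · intro c A B
    simp [Matrix.mul_smul, Matrix.smul_mul, ← Finset.smul_sum, Matrix.trace_smul,
      smul_eq_mul]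
  · intro A B
    rw [Matrix.trace_sum, Matrix.trace_sum, map_sum]
    refine Finset.sum_congr rfl fun i _ => ?_
    rw [starRingEnd_apply, ← Matrix.trace_conjTranspose]
    simp only [conjTranspose_mul, conjTranspose_conjTranspose, (hX i).isHermitian.eq,
      (hY i).isHermitian.eq]
    rw [Matrix.trace_mul_comm]
    simp [mul_assoc]
  · intro A hA
    set M : Fin m → Matrix (Fin n) (Fin n) ℂ :=
      fun i => (hX i).sqrt * A * (hY i).sqrt with hM
    have hterm : ∀ i, Matrix.trace (Aᴴ * X i * A * Y i)
        = Matrix.trace ((M i)ᴴ * (M i)) := by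
      intro i
      have h := key_decomp' (hX i).sqrt (hY i).sqrt A
        (hX i).posSemidef_sqrt.isHermitian (hY i).posSemidef_sqrt.isHermitian
      rwa [(hX i).sqrt_mul_self, (hY i).sqrt_mul_self] at h
    have htr : Matrix.trace (∑ i, Aᴴ * X i * A * Y i)
        = ∑ i, Matrix.trace ((M i)ᴴ * (M i)) := by
      rw [Matrix.trace_sum]; exact Finset.sum_congr rfl fun i _ => hterm i
    constructor
    · rw [htr, Complex.re_sum]
      have hnonneg : ∀ i ∈ Finset.univ, (0:ℝ) ≤ (Matrix.trace ((M i)ᴴ * (M i))).re := by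
        intro i _
        rw [trace_conjT_mul_self_re]
        exact Finset.sum_nonneg fun j _ => Finset.sum_nonneg fun k _ =>
          Complex.normSq_nonneg _
      rcases lt_or_eq_of_le (Finset.sum_nonneg hnonneg) with h | h
      · exact h
      · exfalso
        have hzero : ∀ i, M i = 0 := by
          intro i
          have h0 := (Finset.sum_eq_zero_iff_of_nonneg hnonneg).mp h.symm i
            (Finset.mem_univ i)
          rw [trace_conjT_mul_self_re] at h0
          ext k j
          have h1 : ∑ j', ∑ k', Complex.normSq (M i k' j') = 0 := h0
          have h2 : Complex.normSq (M i k j) = 0 := by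
            have := (Finset.sum_eq_zero_iff_of_nonneg
              (fun j' _ => Finset.sum_nonneg fun k' _ => Complex.normSq_nonneg _)).mp h1 j
              (Finset.mem_univ j)
            exact (Finset.sum_eq_zero_iff_of_nonneg
              (fun k' _ => Complex.normSq_nonneg _)).mp this k (Finset.mem_univ k)
          simpa using Complex.normSq_eq_zero.mp h2
        have hXAY : ∀ i, X i * A * Y i = 0 := by
          intro i
          have heq : X i * A * Y i = (hX i).sqrt * M i * (hY i).sqrt := by
            calc X i * A * Y i
                = ((hX i).sqrt * (hX i).sqrt) * A * ((hY i).sqrt * (hY i).sqrt) := by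
                  rw [(hX i).sqrt_mul_self, (hY i).sqrt_mul_self]
              _ = (hX i).sqrt * M i * (hY i).sqrt := by
                  simp only [hM]; noncomm_ring
          rw [heq, hzero i, Matrix.mul_zero, Matrix.zero_mul]
        have : (fun A : Matrix (Fin n) (Fin n) ℂ => ∑ i, X i * A * Y i) A
            = (fun A : Matrix (Fin n) (Fin n) ℂ => ∑ i, X i * A * Y i) 0 := by
          simp only [Matrix.mul_zero, Matrix.zero_mul, Finset.sum_const_zero]
          exact Finset.sum_eq_zero fun i _ => hXAY i
        exact hA (hinj this)
    · rw [htr, Complex.im_sum]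
      exact Finset.sum_eq_zero fun i _ => trace_conjT_mul_self_im (M i)
end

section
/- Let A = [a_ij] be an n×n real anti-symmetric matrix and ρ_1, ..., ρ_n > 0 positive weights. Define σ_i = (Σ_j ρ_j a_ij) / (Σ_j ρ_j). Then the matrix [σ_i − σ_j] is the orthogonal projection of A onto the subspace of additively consistent matrices with respect to the weighted Frobenius inner product ⟨A, B⟩ = Σ_{i,j} ρ_i ρ_j a_ij b_ij. That is, A − [σ_i − σ_j] is orthogonal to every additively consistent matrix in this inner product. -/
/-- For an anti-symmetric matrix A and positive weights ρ, the matrix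
[σ_i − σ_j] with σ_i the ρ-weighted row means is the orthogonal projection of A
onto the additively consistent matrices with respect to the weighted Frobenius
inner product ⟨A,B⟩ = Σ ρ_i ρ_j a_ij b_ij: the residual is orthogonal to every
matrix of the form [τ_i − τ_j]. -/
theorem weighted_projection_orthogonal {n : ℕ}
    (A : Matrix (Fin n) (Fin n) ℝ)
    (hanti : ∀ i j, A i j = -A j i)
    (ρ : Fin n → ℝ) (hρ : ∀ i, 0 < ρ i)
    (σ : Fin n → ℝ)
    (hσ : ∀ i, σ i = (∑ j, ρ j * A i j) / (∑ j, ρ j)) :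
    ∀ τ : Fin n → ℝ,
      ∑ i, ∑ j, ρ i * ρ j * (A i j - (σ i - σ j)) * (τ i - τ j) = 0 := by
  intro τ
  rcases Nat.eq_zero_or_pos n with hn | hn
  · subst hn; simp
  have hS : (0:ℝ) < ∑ j, ρ j :=
    Finset.sum_pos (fun i _ => hρ i) ⟨⟨0, hn⟩, Finset.mem_univ _⟩
  have hSne : (∑ j, ρ j) ≠ 0 := ne_of_gt hS
  -- σ i * S = ∑ j, ρ j * A i j
  have hσS : ∀ i, σ i * (∑ j, ρ j) = ∑ j, ρ j * A i j := by
    intro i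
    rw [hσ i, div_mul_cancel₀ _ hSne]
  -- double sum of ρ i ρ j A i j is zero
  have hAA : ∑ i, ∑ j, ρ i * (ρ j * A i j) = 0 := by
    have hswap : ∑ i, ∑ j, ρ i * (ρ j * A i j)
        = ∑ i, ∑ j, ρ j * (ρ i * A j i) := Finset.sum_comm
    have h2 : ∑ i, ∑ j, ρ i * (ρ j * A i j) + ∑ i, ∑ j, ρ i * (ρ j * A i j)
        = ∑ i, ∑ j, (ρ i * (ρ j * A i j) + ρ j * (ρ i * A j i)) := by
      rw (occs := .pos [2]) [hswap]
      rw [← Finset.sum_add_distrib]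
      exact Finset.sum_congr rfl fun i _ => (Finset.sum_add_distrib).symm
    have h3 : ∑ i, ∑ j, (ρ i * (ρ j * A i j) + ρ j * (ρ i * A j i)) = 0 := by
      apply Finset.sum_eq_zero; intro i _
      apply Finset.sum_eq_zero; intro j _
      rw [hanti j i]; ring
    linarith [h2, h3]
  -- ∑ ρ i σ i = 0
  have hρσ : ∑ i, ρ i * σ i = 0 := by
    have : (∑ i, ρ i * σ i) * (∑ j, ρ j) = 0 := by
      rw [Finset.sum_mul]
      calc ∑ i, ρ i * σ i * (∑ j, ρ j) = ∑ i, ρ i * (σ i * (∑ j, ρ j)) := by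
            apply Finset.sum_congr rfl; intros; ring
        _ = ∑ i, ρ i * ∑ j, ρ j * A i j := by
            apply Finset.sum_congr rfl; intro i _; rw [hσS i]
        _ = ∑ i, ∑ j, ρ i * (ρ j * A i j) := by
            apply Finset.sum_congr rfl; intros; rw [Finset.mul_sum]
        _ = 0 := hAA
    exact (mul_eq_zero.mp this).resolve_right hSne
  -- weighted row sums of the residual vanish
  have hrow : ∀ i, ∑ j, ρ j * (A i j - (σ i - σ j)) = 0 := by
    intro i
    have e : ∑ j, ρ j * (A i j - (σ i - σ j))
        = (∑ j, ρ j * A i j) - σ i * (∑ j, ρ j) + ∑ j, ρ j * σ j := by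
      rw [Finset.mul_sum]
      rw [← Finset.sum_sub_distrib, ← Finset.sum_add_distrib]
      apply Finset.sum_congr rfl; intros; ring
    rw [e, hσS i]
    have h0 : ∑ j, ρ j * σ j = 0 := hρσ
    linarith
  -- weighted column sums also vanish (by antisymmetry of the residual)
  have hcol : ∀ j, ∑ i, ρ i * (A i j - (σ i - σ j)) = 0 := by
    intro j
    have : ∑ i, ρ i * (A i j - (σ i - σ j))
        = -∑ i, ρ i * (A j i - (σ j - σ i)) := by
      rw [← Finset.sum_neg_distrib]
      apply Finset.sum_congr rfl; intro i _
      rw [hanti i j]; ring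
    rw [this, hrow j, neg_zero]
  -- expand the bilinear form
  have key : ∑ i, ∑ j, ρ i * ρ j * (A i j - (σ i - σ j)) * (τ i - τ j)
      = ∑ i, (ρ i * τ i) * (∑ j, ρ j * (A i j - (σ i - σ j)))
        - ∑ j, (ρ j * τ j) * (∑ i, ρ i * (A i j - (σ i - σ j))) := by
    have e1 : ∑ i, (ρ i * τ i) * (∑ j, ρ j * (A i j - (σ i - σ j)))
        = ∑ i, ∑ j, (ρ i * τ i) * (ρ j * (A i j - (σ i - σ j))) := by
      apply Finset.sum_congr rfl; intros; rw [Finset.mul_sum]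
    have e2 : ∑ j, (ρ j * τ j) * (∑ i, ρ i * (A i j - (σ i - σ j)))
        = ∑ i, ∑ j, (ρ j * τ j) * (ρ i * (A i j - (σ i - σ j))) := by
      rw [Finset.sum_comm]
      apply Finset.sum_congr rfl; intros; rw [Finset.mul_sum]
    rw [e1, e2, ← Finset.sum_sub_distrib]
    apply Finset.sum_congr rfl; intro i _
    rw [← Finset.sum_sub_distrib]
    apply Finset.sum_congr rfl; intro j _
    ring
  rw [key]
  rw [Finset.sum_eq_zero fun i _ => by rw [hrow i, mul_zero]]
  rw [Finset.sum_eq_zero fun j _ => by rw [hcol j, mul_zero]]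
  ring
end
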